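/- If Ω is a g×g symmetric matrix with positive definite imaginary part and [[A,B],[C,D]] ∈ Sp(2g,ℝ), then CΩ + D is invertible. -/

import Mathlib

/-!
Put `M = CΩ + D` and `N = AΩ + B`. The symplectic relations make `Mᴴ N - Nᴴ M` collapse to
`Ω - Ωᴴ`, which for symmetric `Ω` is `2i · Im Ω`. So if `M v = 0`, then
`v* (Im Ω) v = 0`, and this is impossible for `v ≠ 0` since `Im Ω` is positive definite: its
value is `xᵀ (Im Ω) x + yᵀ (Im Ω) y` for `v = x + i y`.
-/

open Matrix

namespace Matrix

variable {n : Type*}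

theorem sub_conjTranspose_eq_of_transpose_eq {Ω : Matrix n n ℂ} (hΩ : Ωᵀ = Ω) :
    Ω - Ωᴴ = (2 * Complex.I) • (Ω.map Complex.im).map (↑) := by
  ext i j
  rw [sub_apply, conjTranspose_apply, ← transpose_apply Ω i j, hΩ]
  apply Complex.ext <;> simp; ring

variable [Fintype n]

theorem conjTranspose_mul_sub_conjTranspose_mul_eq {R : Type*} [Ring R] [StarRing R]
    [DecidableEq n] {A B C D : Matrix n n R}
    (hAC : Aᴴ * C = Cᴴ * A) (hBD : Bᴴ * D = Dᴴ * B) (hAD : Aᴴ * D - Cᴴ * B = 1)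
    (Ω : Matrix n n R) :
    (C * Ω + D)ᴴ * (A * Ω + B) - (A * Ω + B)ᴴ * (C * Ω + D) = Ω - Ωᴴ := by
  have hDA : Dᴴ * A - Bᴴ * C = 1 := by
    simpa [conjTranspose_sub, conjTranspose_mul] using congrArg conjTranspose hAD
  have expand : (C * Ω + D)ᴴ * (A * Ω + B) - (A * Ω + B)ᴴ * (C * Ω + D)
      = Ωᴴ * (Cᴴ * A - Aᴴ * C) * Ω + (Dᴴ * B - Bᴴ * D)
        - Ωᴴ * (Aᴴ * D - Cᴴ * B) + (Dᴴ * A - Bᴴ * C) * Ω := by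
    simp only [conjTranspose_add, conjTranspose_mul]
    noncomm_ring
  rw [expand, hAC, hBD, hAD, hDA]
  noncomm_ring

theorem isUnit_mul_add_of_conjTranspose_relations {K : Type*} [Field K] [StarRing K]
    [DecidableEq n] {A B C D : Matrix n n K}
    (hAC : Aᴴ * C = Cᴴ * A) (hBD : Bᴴ * D = Dᴴ * B) (hAD : Aᴴ * D - Cᴴ * B = 1)
    {Ω : Matrix n n K} (hΩ : ∀ v ≠ 0, star v ⬝ᵥ (Ω - Ωᴴ) *ᵥ v ≠ 0) :
    IsUnit (C * Ω + D) := by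
  rw [isUnit_iff_isUnit_det, isUnit_iff_ne_zero]
  intro hdet
  obtain ⟨v, hv0, hv⟩ := exists_mulVec_eq_zero_iff.2 hdet
  refine hΩ v hv0 ?_
  rw [← conjTranspose_mul_sub_conjTranspose_mul_eq hAC hBD hAD, sub_mulVec, dotProduct_sub,
    ← mulVec_mulVec, ← mulVec_mulVec, hv, mulVec_zero, dotProduct_zero, dotProduct_mulVec,
    ← star_mulVec, hv]
  simp

theorem re_star_dotProduct_map_ofReal_mulVec (P : Matrix n n ℝ) (v : n → ℂ) :
    (star v ⬝ᵥ P.map ((↑) : ℝ → ℂ) *ᵥ v).re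
      = (fun i ↦ (v i).re) ⬝ᵥ P *ᵥ (fun i ↦ (v i).re)
        + (fun i ↦ (v i).im) ⬝ᵥ P *ᵥ (fun i ↦ (v i).im) := by
  simp only [dotProduct, mulVec, Pi.star_apply, Finset.mul_sum, Complex.re_sum,
    ← Finset.sum_add_distrib, map_apply, Complex.mul_re, Complex.mul_im, Complex.star_def,
    Complex.conj_re, Complex.conj_im, Complex.ofReal_re, Complex.ofReal_im]
  refine Finset.sum_congr rfl fun i _ ↦ Finset.sum_congr rfl fun j _ ↦ ?_
  ring

theorem PosDef.re_star_dotProduct_map_ofReal_mulVec_pos {P : Matrix n n ℝ} (hP : P.PosDef)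
    {v : n → ℂ} (hv : v ≠ 0) : 0 < (star v ⬝ᵥ P.map ((↑) : ℝ → ℂ) *ᵥ v).re := by
  rw [re_star_dotProduct_map_ofReal_mulVec]
  by_cases hre : (fun i ↦ (v i).re) = 0
  · have him : (fun i ↦ (v i).im) ≠ 0 := fun him ↦
      hv (funext fun i ↦ Complex.ext (congrFun hre i) (congrFun him i))
    simpa using add_pos_of_nonneg_of_pos (hP.posSemidef.dotProduct_mulVec_nonneg _)
      (hP.dotProduct_mulVec_pos him)
  · simpa using add_pos_of_pos_of_nonneg (hP.dotProduct_mulVec_pos hre)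
      (hP.posSemidef.dotProduct_mulVec_nonneg _)

theorem star_dotProduct_sub_conjTranspose_mulVec_ne_zero {Ω : Matrix n n ℂ} (hΩ : Ωᵀ = Ω)
    (hIm : (Ω.map Complex.im).PosDef) {v : n → ℂ} (hv : v ≠ 0) :
    star v ⬝ᵥ (Ω - Ωᴴ) *ᵥ v ≠ 0 := by
  rw [sub_conjTranspose_eq_of_transpose_eq hΩ, smul_mulVec, dotProduct_smul, smul_eq_mul]
  exact mul_ne_zero (by simp) fun h ↦
    (hIm.re_star_dotProduct_map_ofReal_mulVec_pos hv).ne' (by rw [h, Complex.zero_re])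

theorem conjTranspose_map_ofReal_mul (M N : Matrix n n ℝ) :
    (M.map ((↑) : ℝ → ℂ))ᴴ * N.map (↑) = (Mᵀ * N).map (↑) := by
  rw [← conjTranspose_map _ fun x ↦ (Complex.conj_ofReal x).symm,
    conjTranspose_eq_transpose_of_trivial]
  exact (Matrix.map_mul (f := Complex.ofRealHom)).symm

end Matrix

/-- If `Ω` is a symmetric `g × g` complex matrix with positive definite imaginary part and
`[[A,B],[C,D]]` is a real symplectic matrix, then `CΩ + D` is invertible. -/
theorem stmt_19 (g : ℕ) (Ω : Matrix (Fin g) (Fin g) ℂ)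
    (hsym : Ωᵀ = Ω)
    (hpos : Matrix.PosDef (fun i j => (Ω i j).im : Matrix (Fin g) (Fin g) ℝ))
    (A B C D : Matrix (Fin g) (Fin g) ℝ)
    (h1 : Aᵀ * C = Cᵀ * A) (h2 : Bᵀ * D = Dᵀ * B) (h3 : Aᵀ * D - Cᵀ * B = 1) :
    IsUnit (C.map (fun x => (x : ℂ)) * Ω + D.map (fun x => (x : ℂ))) := by
  refine isUnit_mul_add_of_conjTranspose_relations (A := A.map (↑)) (B := B.map (↑))
    (by rw [conjTranspose_map_ofReal_mul, conjTranspose_map_ofReal_mul, h1])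
    (by rw [conjTranspose_map_ofReal_mul, conjTranspose_map_ofReal_mul, h2])
    (by rw [conjTranspose_map_ofReal_mul, conjTranspose_map_ofReal_mul,
      ← Matrix.map_sub _ (by simp), h3, Matrix.map_one _ (by simp) (by simp)])
    fun _ ↦ star_dotProduct_sub_conjTranspose_mulVec_ne_zero hsym hpos
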